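/- Restricted strong convexity: if X ∈ ℝ^{d×n} is full-rank, then for any sublevel set 𝒲 = {w : L¹(w) ≤ l} there exists μ > 0 such that L¹(v) ≥ L¹(w) + ∇L¹(w)ᵀ(v−w) + (μ/2)‖v−w‖² for all w, v ∈ 𝒲 with v − w ∈ span(X). -/

import Mathlib

/-!
Statement 0: The gradient of the normalized cross-entropy distillation loss
L¹(w) = (1/n) Σᵢ ℓᵢ(wᵀxᵢ) equals (1/n) Σᵢ (σ(wᵀxᵢ) − yᵢ)·xᵢ, where yᵢ = σ(w*ᵀxᵢ),
and hence ∇L¹(w) always lies in the span of the data vectors x₁,…,xₙ.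
-/

open Real Matrix Finset
open scoped RealInnerProductSpace BigOperators

set_option maxHeartbeats 1000000

noncomputable section

abbrev E (d : ℕ) := EuclideanSpace ℝ (Fin d)

/-- The _root_.sigmoid function σ(u) = 1/(1+e^{−u}). -/
def _root_.sigmoid (u : ℝ) : ℝ := 1 / (1 + Real.exp (-u))

/-- Per-instance normalized cross-entropy loss ℓ(u) for soft label y,
ℓ(u) = −y log σ(u) − (1−y) log(1−σ(u)) − ℓ*, with ℓ* = −y log y − (1−y) log(1−y). -/
def perLoss (y u : ℝ) : ℝ :=
  (-(y * Real.log (_root_.sigmoid u)) - (1 - y) * Real.log (1 - _root_.sigmoid u))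
    - (-(y * Real.log y) - (1 - y) * Real.log (1 - y))

/-- The normalized cross-entropy distillation loss L¹(w) = (1/n) Σᵢ ℓᵢ(⟪w,xᵢ⟫)
with soft labels yᵢ = σ(⟪w*,xᵢ⟫). -/
def distillLoss {d n : ℕ} (x : Fin n → E d) (wstar : E d) (w : E d) : ℝ :=
  (n : ℝ)⁻¹ * ∑ i, perLoss (_root_.sigmoid ⟪wstar, x i⟫) ⟪w, x i⟫

/-- The data matrix X = [x₁,…,xₙ] ∈ ℝ^{d×n} whose columns are the data points. -/
def Xmat {d n : ℕ} (x : Fin n → E d) : Matrix (Fin d) (Fin n) ℝ :=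
  Matrix.of fun k i => x i k

/-!
Statement 5 (Restricted strong convexity): if X is full-rank, then for any sublevel set
𝒲 = {w : L¹(w) ≤ l} there exists μ > 0 such that
L¹(v) ≥ L¹(w) + ∇L¹(w)ᵀ(v−w) + (μ/2)‖v−w‖² for all w, v ∈ 𝒲 with v − w ∈ span(X).
-/

lemma one_add_exp_pos (u : ℝ) : 0 < 1 + Real.exp u := by positivity

lemma sigmoid_pos (u : ℝ) : 0 < _root_.sigmoid u := by
  unfold _root_.sigmoid; positivity

lemma sigmoid_lt_one (u : ℝ) : _root_.sigmoid u < 1 := by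
  unfold _root_.sigmoid
  rw [div_lt_one (one_add_exp_pos _)]
  have := Real.exp_pos (-u); linarith

lemma one_sub_sigmoid (u : ℝ) : 1 - _root_.sigmoid u = _root_.sigmoid (-u) := by
  unfold _root_.sigmoid
  have h1 := one_add_exp_pos (-u)
  have h2 := one_add_exp_pos u
  rw [neg_neg]
  have hmul : Real.exp (-u) * Real.exp u = 1 := by rw [← Real.exp_add]; simp
  field_simp
  linear_combination hmul

lemma sigmoid_mono : Monotone _root_.sigmoid := by
  intro a b hab
  unfold _root_.sigmoid
  apply div_le_div_of_nonneg_left one_pos.le (one_add_exp_pos _)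
  have : Real.exp (-b) ≤ Real.exp (-a) := Real.exp_le_exp.mpr (by linarith)
  linarith

lemma hasDerivAt_sigmoid (u : ℝ) :
    HasDerivAt _root_.sigmoid (_root_.sigmoid u * (1 - _root_.sigmoid u)) u := by
  have h0 : (1 + Real.exp (-u)) ≠ 0 := (one_add_exp_pos (-u)).ne'
  have h1 : HasDerivAt (fun v : ℝ => 1 + Real.exp (-v)) (-Real.exp (-u)) u := by
    have := (Real.hasDerivAt_exp (-u)).comp u (hasDerivAt_neg u)
    simpa using this.const_add 1
  have h2 : HasDerivAt (fun v : ℝ => (1 + Real.exp (-v))⁻¹) _ u := h1.inv h0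
  have heq : (fun v : ℝ => (1 + Real.exp (-v))⁻¹) = _root_.sigmoid := by
    funext v; simp [_root_.sigmoid, one_div]
  rw [heq] at h2
  convert h2 using 1
  rw [one_sub_sigmoid]
  unfold _root_.sigmoid
  have h2' := one_add_exp_pos u
  have hmul : Real.exp (-u) * Real.exp u = 1 := by rw [← Real.exp_add]; simp
  field_simp
  linear_combination (-1) * hmul

lemma perLoss_eq (y u : ℝ) :
    perLoss y u = Real.log (1 + Real.exp (-u)) + (1 - y) * u
      - (-(y * Real.log y) - (1 - y) * Real.log (1 - y)) := by
  unfold perLoss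
  have h0 : (1 + Real.exp (-u)) ≠ 0 := (one_add_exp_pos (-u)).ne'
  have hls : Real.log (_root_.sigmoid u) = -Real.log (1 + Real.exp (-u)) := by
    unfold _root_.sigmoid; rw [one_div, Real.log_inv]
  have h1s : Real.log (1 - _root_.sigmoid u) = -u - Real.log (1 + Real.exp (-u)) := by
    have : 1 - _root_.sigmoid u = Real.exp (-u) / (1 + Real.exp (-u)) := by
      unfold _root_.sigmoid; field_simp; ring
    rw [this, Real.log_div (Real.exp_ne_zero _) h0, Real.log_exp]
  rw [hls, h1s]; ring

lemma hasDerivAt_perLoss (y u : ℝ) :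
    HasDerivAt (perLoss y) (_root_.sigmoid u - y) u := by
  have hfun : perLoss y = fun u => Real.log (1 + Real.exp (-u)) + (1 - y) * u
      - (-(y * Real.log y) - (1 - y) * Real.log (1 - y)) := funext fun u => perLoss_eq y u
  rw [hfun]
  have h0 : (1 + Real.exp (-u)) ≠ 0 := (one_add_exp_pos (-u)).ne'
  have h1 : HasDerivAt (fun v : ℝ => 1 + Real.exp (-v)) (-Real.exp (-u)) u := by
    have := (Real.hasDerivAt_exp (-u)).comp u (hasDerivAt_neg u)
    simpa using this.const_add 1
  have h2 : HasDerivAt (fun v : ℝ => Real.log (1 + Real.exp (-v)))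
      (-Real.exp (-u) / (1 + Real.exp (-u))) u := by
    simpa [div_eq_mul_inv, mul_comm, Function.comp_def] using (Real.hasDerivAt_log h0).comp u h1
  have h3 : HasDerivAt (fun v : ℝ => (1 - y) * v) (1 - y) u := by
    simpa using (hasDerivAt_id u).const_mul (1 - y)
  have := (h2.add h3).sub_const (-(y * Real.log y) - (1 - y) * Real.log (1 - y))
  exact this.congr_deriv (by
    unfold _root_.sigmoid
    field_simp
    ring)

lemma perLoss_nonneg {y : ℝ} (h0 : 0 < y) (h1 : y < 1) (u : ℝ) : 0 ≤ perLoss y u := by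
  have hs0 := _root_.sigmoid_pos u
  have hs1 := _root_.sigmoid_lt_one u
  have hd1 : Real.log (_root_.sigmoid u / y) ≤ _root_.sigmoid u / y - 1 :=
    Real.log_le_sub_one_of_pos (by positivity)
  have hd2 : Real.log ((1 - _root_.sigmoid u) / (1 - y)) ≤ (1 - _root_.sigmoid u) / (1 - y) - 1 :=
    Real.log_le_sub_one_of_pos (by apply div_pos <;> linarith)
  rw [Real.log_div hs0.ne' h0.ne'] at hd1
  rw [Real.log_div (by linarith) (by linarith : (1:ℝ) - y ≠ 0)] at hd2
  have e1 : y * (Real.log (_root_.sigmoid u) - Real.log y) ≤ _root_.sigmoid u - y := by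
    have := mul_le_mul_of_nonneg_left hd1 h0.le
    calc y * (Real.log (_root_.sigmoid u) - Real.log y) ≤ y * (_root_.sigmoid u / y - 1) := this
    _ = _root_.sigmoid u - y := by field_simp
  have e2 : (1 - y) * (Real.log (1 - _root_.sigmoid u) - Real.log (1 - y))
      ≤ (1 - _root_.sigmoid u) - (1 - y) := by
    have h1y : (0:ℝ) < 1 - y := by linarith
    have := mul_le_mul_of_nonneg_left hd2 h1y.le
    calc (1 - y) * (Real.log (1 - _root_.sigmoid u) - Real.log (1 - y))
        ≤ (1 - y) * ((1 - _root_.sigmoid u) / (1 - y) - 1) := this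
    _ = (1 - _root_.sigmoid u) - (1 - y) := by field_simp
  unfold perLoss
  nlinarith [e1, e2]

lemma perLoss_lower {y : ℝ} (h0 : 0 < y) (h1 : y < 1) (u : ℝ) :
    min y (1 - y) * |u| - (-(y * Real.log y) - (1 - y) * Real.log (1 - y))
      ≤ perLoss y u := by
  rw [perLoss_eq]
  have key : min y (1 - y) * |u| ≤ Real.log (1 + Real.exp (-u)) + (1 - y) * u := by
    rcases le_or_gt 0 u with hu | hu
    · rw [abs_of_nonneg hu]
      have hlog : (0:ℝ) ≤ Real.log (1 + Real.exp (-u)) :=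
        Real.log_nonneg (by have := (Real.exp_pos (-u)).le; linarith)
      have : min y (1 - y) * u ≤ (1 - y) * u :=
        mul_le_mul_of_nonneg_right (min_le_right _ _) hu
      linarith
    · rw [abs_of_neg hu]
      have hlog : -u ≤ Real.log (1 + Real.exp (-u)) := by
        rw [Real.le_log_iff_exp_le (one_add_exp_pos (-u))]
        linarith
      have : min y (1 - y) * (-u) ≤ y * (-u) :=
        mul_le_mul_of_nonneg_right (min_le_left _ _) (by linarith)
      nlinarith
  linarith

lemma onedim {f f' f'' : ℝ → ℝ} {m : ℝ}
    (hf : ∀ t, HasDerivAt f (f' t) t) (hf' : ∀ t, HasDerivAt f' (f'' t) t)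
    (hm : ∀ t ∈ Set.Icc (0:ℝ) 1, m ≤ f'' t) :
    f 0 + f' 0 + m / 2 ≤ f 1 := by
  set φ : ℝ → ℝ := fun t => f t - f 0 - f' 0 * t - m / 2 * t ^ 2 with hφdef
  set ψ : ℝ → ℝ := fun t => f' t - f' 0 - m * t with hψdef
  have hdφ : ∀ t, HasDerivAt φ (ψ t) t := by
    intro t
    have h1 := ((hf t).sub_const (f 0)).sub ((hasDerivAt_id t).const_mul (f' 0))
    have h2 := h1.sub ((hasDerivAt_pow 2 t).const_mul (m / 2))
    exact h2.congr_deriv (by simp [hψdef]; ring)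
  have hdψ : ∀ t, HasDerivAt ψ (f'' t - m) t := by
    intro t
    have h1 := ((hf' t).sub_const (f' 0)).sub ((hasDerivAt_id t).const_mul m)
    exact h1.congr_deriv (by simp)
  have hψmono : MonotoneOn ψ (Set.Icc 0 1) := by
    apply monotoneOn_of_deriv_nonneg (convex_Icc 0 1)
      (fun t _ => (hdψ t).continuousAt.continuousWithinAt)
      (fun t _ => ((hdψ t).differentiableAt).differentiableWithinAt)
    intro t ht
    rw [(hdψ t).deriv]
    rw [interior_Icc] at ht
    have := hm t ⟨ht.1.le, ht.2.le⟩
    linarith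
  have hψ0 : ψ 0 = 0 := by simp [hψdef]
  have hψnn : ∀ t ∈ Set.Icc (0:ℝ) 1, 0 ≤ ψ t := by
    intro t ht
    have := hψmono (Set.mem_Icc.mpr ⟨le_refl 0, zero_le_one⟩) ht ht.1
    rwa [hψ0] at this
  have hφmono : MonotoneOn φ (Set.Icc 0 1) := by
    apply monotoneOn_of_deriv_nonneg (convex_Icc 0 1)
      (fun t _ => (hdφ t).continuousAt.continuousWithinAt)
      (fun t _ => ((hdφ t).differentiableAt).differentiableWithinAt)
    intro t ht
    rw [(hdφ t).deriv]
    rw [interior_Icc] at ht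
    exact hψnn t ⟨ht.1.le, ht.2.le⟩
  have h01 := hφmono (Set.mem_Icc.mpr ⟨le_refl 0, zero_le_one⟩)
    (Set.mem_Icc.mpr ⟨zero_le_one, le_refl 1⟩) zero_le_one
  simp only [hφdef] at h01
  nlinarith [h01]


lemma sum_strong {n : ℕ} (y a c : Fin n → ℝ) (R m : ℝ)
    (ha : ∀ i, |a i| ≤ R) (hb : ∀ i, |a i + c i| ≤ R)
    (hm : m ≤ _root_.sigmoid (-R) ^ 2 * ∑ i, c i ^ 2) :
    (∑ i, perLoss (y i) (a i)) + (∑ i, (_root_.sigmoid (a i) - y i) * c i) + m / 2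
      ≤ ∑ i, perLoss (y i) (a i + c i) := by
  have hlin : ∀ (i : Fin n) (t : ℝ), HasDerivAt (fun t : ℝ => a i + t * c i) (c i) t := by
    intro i t
    simpa using (hasDerivAt_mul_const (c i)).const_add (a i)
  have hf : ∀ t, HasDerivAt (fun t => ∑ i, perLoss (y i) (a i + t * c i))
      (∑ i, (_root_.sigmoid (a i + t * c i) - y i) * c i) t := by
    intro t
    apply HasDerivAt.fun_sum
    intro i _
    exact (hasDerivAt_perLoss (y i) (a i + t * c i)).comp t (hlin i t)
  have hf' : ∀ t, HasDerivAt (fun t => ∑ i, (_root_.sigmoid (a i + t * c i) - y i) * c i)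
      (∑ i, _root_.sigmoid (a i + t * c i) * (1 - _root_.sigmoid (a i + t * c i)) * c i * c i) t := by
    intro t
    apply HasDerivAt.fun_sum
    intro i _
    exact (((_root_.hasDerivAt_sigmoid (a i + t * c i)).comp t (hlin i t)).sub_const (y i)).mul_const (c i)
  have hmm : ∀ t ∈ Set.Icc (0:ℝ) 1,
      m ≤ ∑ i, _root_.sigmoid (a i + t * c i) * (1 - _root_.sigmoid (a i + t * c i)) * c i * c i := by
    intro t ht
    obtain ⟨ht0, ht1⟩ := ht
    refine hm.trans ?_
    rw [Finset.mul_sum]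
    apply Finset.sum_le_sum
    intro i _
    have habs : |a i + t * c i| ≤ R := by
      have heq : a i + t * c i = (1 - t) * a i + t * (a i + c i) := by ring
      rw [heq]
      calc |(1 - t) * a i + t * (a i + c i)|
          ≤ |(1 - t) * a i| + |t * (a i + c i)| := abs_add_le _ _
        _ = (1 - t) * |a i| + t * |a i + c i| := by
            rw [abs_mul, abs_mul, abs_of_nonneg (by linarith : (0:ℝ) ≤ 1 - t),
              abs_of_nonneg ht0]
        _ ≤ (1 - t) * R + t * R := by
            have h1 := mul_le_mul_of_nonneg_left (ha i) (by linarith : (0:ℝ) ≤ 1 - t)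
            have h2 := mul_le_mul_of_nonneg_left (hb i) ht0
            linarith
        _ = R := by ring
    obtain ⟨habs1, habs2⟩ := abs_le.mp habs
    have hs1 : _root_.sigmoid (-R) ≤ _root_.sigmoid (a i + t * c i) := sigmoid_mono (by linarith)
    have hs2 : _root_.sigmoid (-R) ≤ 1 - _root_.sigmoid (a i + t * c i) := by
      rw [one_sub_sigmoid]
      exact sigmoid_mono (by linarith)
    have hsp := _root_.sigmoid_pos (-R)
    have hprod : _root_.sigmoid (-R) * _root_.sigmoid (-R)
        ≤ _root_.sigmoid (a i + t * c i) * (1 - _root_.sigmoid (a i + t * c i)) :=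
      mul_le_mul hs1 hs2 hsp.le (_root_.sigmoid_pos _).le
    calc _root_.sigmoid (-R) ^ 2 * c i ^ 2
        = _root_.sigmoid (-R) * _root_.sigmoid (-R) * (c i * c i) := by ring
      _ ≤ _root_.sigmoid (a i + t * c i) * (1 - _root_.sigmoid (a i + t * c i)) * (c i * c i) :=
          mul_le_mul_of_nonneg_right hprod (mul_self_nonneg _)
      _ = _root_.sigmoid (a i + t * c i) * (1 - _root_.sigmoid (a i + t * c i)) * c i * c i := by ring
  have := onedim hf hf' hmm
  simpa using this

theorem restricted_strong_convexity_aux {d n : ℕ} (hn : 0 < n)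
    (x : Fin n → E d) (wstar : E d) (l : ℝ) :
    ∃ μ > (0 : ℝ), ∀ w v : E d,
      distillLoss x wstar w ≤ l → distillLoss x wstar v ≤ l →
      v - w ∈ Submodule.span ℝ (Set.range x) →
      distillLoss x wstar w + ⟪gradient (distillLoss x wstar) w, v - w⟫
          + μ / 2 * ‖v - w‖ ^ 2
        ≤ distillLoss x wstar v := by
  classical
  haveI : Nonempty (Fin n) := ⟨⟨0, hn⟩⟩
  have hn' : (0:ℝ) < n := by exact_mod_cast hn
  set S : Submodule ℝ (E d) := Submodule.span ℝ (Set.range x) with hSdef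
  set T : S →ₗ[ℝ] EuclideanSpace ℝ (Fin n) :=
    (WithLp.linearEquiv 2 ℝ (Fin n → ℝ)).symm.toLinearMap.comp
      (LinearMap.pi fun i => ((innerSL ℝ (x i)).toLinearMap).comp S.subtype) with hTdef
  have hTapp : ∀ (z : S) (i : Fin n), T z i = ⟪x i, (z : E d)⟫ := fun z i => rfl
  have hker : LinearMap.ker T = ⊥ := by
    rw [LinearMap.ker_eq_bot']
    intro z hz0
    have hz : ∀ i, ⟪x i, (z : E d)⟫ = 0 := by
      intro i
      have h1 : T z i = 0 := by rw [hz0]; rfl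
      rwa [hTapp] at h1
    have horth : ∀ u ∈ S, ⟪u, (z : E d)⟫ = 0 := by
      intro u hu
      induction hu using Submodule.span_induction with
      | mem p hp => obtain ⟨i, rfl⟩ := hp; exact hz i
      | zero => simp
      | add p q hp hq ihp ihq => rw [inner_add_left, ihp, ihq, add_zero]
      | smul r p hp ihp => rw [real_inner_smul_left, ihp, mul_zero]
    exact Subtype.ext (inner_self_eq_zero.mp (horth _ z.2))
  obtain ⟨K, hKpos, hKanti⟩ := T.exists_antilipschitzWith hker
  have hKr : (0:ℝ) < (K : ℝ) := by exact_mod_cast hKpos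
  have hanti : ∀ z : S, ‖(z : E d)‖ ≤ (K : ℝ) * ‖T z‖ := by
    intro z
    have h := hKanti.le_mul_dist z 0
    simpa [dist_eq_norm, map_zero] using h
  set R : ℝ := max 0 (Finset.univ.sup' Finset.univ_nonempty fun i =>
      ((n : ℝ) * l + (-(_root_.sigmoid ⟪wstar, x i⟫ * Real.log (_root_.sigmoid ⟪wstar, x i⟫)) -
        (1 - _root_.sigmoid ⟪wstar, x i⟫) * Real.log (1 - _root_.sigmoid ⟪wstar, x i⟫))) /
        min (_root_.sigmoid ⟪wstar, x i⟫) (1 - _root_.sigmoid ⟪wstar, x i⟫)) with hRdef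
  have hRbound : ∀ u : E d, distillLoss x wstar u ≤ l → ∀ i, |⟪u, x i⟫| ≤ R := by
    intro u hu i
    have hy0 : 0 < _root_.sigmoid ⟪wstar, x i⟫ := _root_.sigmoid_pos _
    have hy1 : _root_.sigmoid ⟪wstar, x i⟫ < 1 := _root_.sigmoid_lt_one _
    have hsum : ∑ j, perLoss (_root_.sigmoid ⟪wstar, x j⟫) ⟪u, x j⟫ ≤ (n:ℝ) * l := by
      have h2 := hu
      unfold distillLoss at h2
      rwa [inv_mul_le_iff₀ hn'] at h2
    have hone : perLoss (_root_.sigmoid ⟪wstar, x i⟫) ⟪u, x i⟫ ≤ (n:ℝ) * l :=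
      le_trans (Finset.single_le_sum
        (f := fun j => perLoss (_root_.sigmoid ⟪wstar, x j⟫) ⟪u, x j⟫)
        (fun j _ => perLoss_nonneg (_root_.sigmoid_pos _) (_root_.sigmoid_lt_one _) _)
        (Finset.mem_univ i)) hsum
    have hlow := perLoss_lower hy0 hy1 ⟪u, x i⟫
    have hcpos : 0 < min (_root_.sigmoid ⟪wstar, x i⟫) (1 - _root_.sigmoid ⟪wstar, x i⟫) :=
      lt_min hy0 (by linarith)
    have hub : |⟪u, x i⟫| ≤
        ((n : ℝ) * l + (-(_root_.sigmoid ⟪wstar, x i⟫ * Real.log (_root_.sigmoid ⟪wstar, x i⟫)) -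
          (1 - _root_.sigmoid ⟪wstar, x i⟫) * Real.log (1 - _root_.sigmoid ⟪wstar, x i⟫))) /
          min (_root_.sigmoid ⟪wstar, x i⟫) (1 - _root_.sigmoid ⟪wstar, x i⟫) := by
      rw [le_div_iff₀ hcpos]
      nlinarith [hlow, hone]
    have hsup : ((n : ℝ) * l + (-(_root_.sigmoid ⟪wstar, x i⟫ * Real.log (_root_.sigmoid ⟪wstar, x i⟫)) -
          (1 - _root_.sigmoid ⟪wstar, x i⟫) * Real.log (1 - _root_.sigmoid ⟪wstar, x i⟫))) /
          min (_root_.sigmoid ⟪wstar, x i⟫) (1 - _root_.sigmoid ⟪wstar, x i⟫)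
        ≤ Finset.univ.sup' Finset.univ_nonempty (fun i =>
          ((n : ℝ) * l + (-(_root_.sigmoid ⟪wstar, x i⟫ * Real.log (_root_.sigmoid ⟪wstar, x i⟫)) -
            (1 - _root_.sigmoid ⟪wstar, x i⟫) * Real.log (1 - _root_.sigmoid ⟪wstar, x i⟫))) /
            min (_root_.sigmoid ⟪wstar, x i⟫) (1 - _root_.sigmoid ⟪wstar, x i⟫)) :=
      Finset.le_sup' (f := fun i =>
          ((n : ℝ) * l + (-(_root_.sigmoid ⟪wstar, x i⟫ * Real.log (_root_.sigmoid ⟪wstar, x i⟫)) -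
            (1 - _root_.sigmoid ⟪wstar, x i⟫) * Real.log (1 - _root_.sigmoid ⟪wstar, x i⟫))) /
            min (_root_.sigmoid ⟪wstar, x i⟫) (1 - _root_.sigmoid ⟪wstar, x i⟫)) (Finset.mem_univ i)
    exact hub.trans (hsup.trans (le_max_right _ _))
  have hsR := _root_.sigmoid_pos (-R)
  refine ⟨(n:ℝ)⁻¹ * _root_.sigmoid (-R) ^ 2 / (K:ℝ)^2, by positivity, ?_⟩
  intro w v hw hv hmem
  set a : Fin n → ℝ := fun i => ⟪w, x i⟫ with hadef
  set c : Fin n → ℝ := fun i => ⟪v, x i⟫ - ⟪w, x i⟫ with hcdef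
  have hac : ∀ i, a i + c i = ⟪v, x i⟫ := fun i => by simp [hadef, hcdef]
  have hcx : ∀ i, ⟪x i, v - w⟫ = c i := by
    intro i
    rw [inner_sub_right, real_inner_comm v (x i), real_inner_comm w (x i)]
  have hTip : ‖v - w‖^2 ≤ (K:ℝ)^2 * ∑ i, c i ^ 2 := by
    set z : S := ⟨v - w, hmem⟩ with hzdef
    have h1 : ‖v - w‖ ≤ (K:ℝ) * ‖T z‖ := hanti z
    have h2 : ‖T z‖^2 = ∑ i, c i ^ 2 := by
      rw [EuclideanSpace.norm_eq, Real.sq_sqrt (by positivity)]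
      refine Finset.sum_congr rfl fun i _ => ?_
      have h3 : T z i = c i := by rw [hTapp z i]; exact hcx i
      rw [h3, Real.norm_eq_abs, sq_abs]
    nlinarith [norm_nonneg (T z), norm_nonneg (v - w)]
  have hra : ∀ i, |a i| ≤ R := fun i => hRbound w hw i
  have hrb : ∀ i, |a i + c i| ≤ R := fun i => by rw [hac i]; exact hRbound v hv i
  have hmle : (n:ℝ) * ((n:ℝ)⁻¹ * _root_.sigmoid (-R) ^ 2 / (K:ℝ)^2 * ‖v - w‖^2)
      ≤ _root_.sigmoid (-R)^2 * ∑ i, c i ^ 2 := by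
    have hstep : _root_.sigmoid (-R)^2 * ‖v - w‖^2 ≤ _root_.sigmoid (-R)^2 * ((K:ℝ)^2 * ∑ i, c i ^ 2) :=
      mul_le_mul_of_nonneg_left hTip (by positivity)
    have heq : (n:ℝ) * ((n:ℝ)⁻¹ * _root_.sigmoid (-R) ^ 2 / (K:ℝ)^2 * ‖v - w‖^2)
        = _root_.sigmoid (-R)^2 * ‖v - w‖^2 / (K:ℝ)^2 := by
      field_simp
    rw [heq, div_le_iff₀ (by positivity)]
    calc _root_.sigmoid (-R)^2 * ‖v - w‖^2
        ≤ _root_.sigmoid (-R)^2 * ((K:ℝ)^2 * ∑ i, c i ^ 2) := hstep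
      _ = _root_.sigmoid (-R)^2 * (∑ i, c i ^ 2) * (K:ℝ)^2 := by ring
  have hmain := sum_strong (fun i => _root_.sigmoid ⟪wstar, x i⟫) a c R
    ((n:ℝ) * ((n:ℝ)⁻¹ * _root_.sigmoid (-R) ^ 2 / (K:ℝ)^2 * ‖v - w‖^2)) hra hrb hmle
  -- gradient computation
  have hinner : ∀ i, HasFDerivAt (fun u : E d => ⟪u, x i⟫) (innerSL ℝ (x i)) w := by
    intro i
    have he : (fun u : E d => ⟪u, x i⟫) = fun u : E d => (innerSL ℝ (x i)) u := by
      funext u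
      simp only [innerSL_apply_apply]
      exact (real_inner_comm u (x i)).symm
    rw [he]
    exact (innerSL ℝ (x i)).hasFDerivAt
  have hFD : HasFDerivAt (distillLoss x wstar)
      ((n:ℝ)⁻¹ • ∑ i, (_root_.sigmoid (a i) - _root_.sigmoid ⟪wstar, x i⟫) • (innerSL ℝ (x i))) w := by
    have hsum : HasFDerivAt (fun u : E d => ∑ i, perLoss (_root_.sigmoid ⟪wstar, x i⟫) ⟪u, x i⟫)
        (∑ i, (_root_.sigmoid (a i) - _root_.sigmoid ⟪wstar, x i⟫) • (innerSL ℝ (x i))) w :=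
      HasFDerivAt.fun_sum fun i _ =>
        by have h := (hasDerivAt_perLoss (_root_.sigmoid ⟪wstar, x i⟫) (a i)).comp_hasFDerivAt w (hinner i); exact h
    exact hsum.const_mul _
  have hgrad : gradient (distillLoss x wstar) w
      = (InnerProductSpace.toDual ℝ (E d)).symm
          ((n:ℝ)⁻¹ • ∑ i, (_root_.sigmoid (a i) - _root_.sigmoid ⟪wstar, x i⟫) • (innerSL ℝ (x i))) := by
    have hg : HasGradientAt (distillLoss x wstar)
        ((InnerProductSpace.toDual ℝ (E d)).symm
          ((n:ℝ)⁻¹ • ∑ i, (_root_.sigmoid (a i) - _root_.sigmoid ⟪wstar, x i⟫) • (innerSL ℝ (x i)))) w := by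
      rw [hasGradientAt_iff_hasFDerivAt, LinearIsometryEquiv.apply_symm_apply]
      exact hFD
    exact hg.gradient
  have hip : ⟪gradient (distillLoss x wstar) w, v - w⟫
      = (n:ℝ)⁻¹ * ∑ i, (_root_.sigmoid (a i) - _root_.sigmoid ⟪wstar, x i⟫) * c i := by
    rw [hgrad, InnerProductSpace.toDual_symm_apply]
    simp only [ContinuousLinearMap.smul_apply, ContinuousLinearMap.sum_apply,
      ContinuousLinearMap.coe_smul', Pi.smul_apply, innerSL_apply_apply, smul_eq_mul]
    congr 1
    exact Finset.sum_congr rfl fun i _ => by rw [hcx i]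
  have e1 : distillLoss x wstar w = (n:ℝ)⁻¹ * ∑ i, perLoss (_root_.sigmoid ⟪wstar, x i⟫) (a i) := rfl
  have e2 : distillLoss x wstar v
      = (n:ℝ)⁻¹ * ∑ i, perLoss (_root_.sigmoid ⟪wstar, x i⟫) (a i + c i) := by
    unfold distillLoss
    congr 1
    exact Finset.sum_congr rfl fun i _ => by rw [hac i]
  rw [e1, e2, hip]
  have hfin := mul_le_mul_of_nonneg_left hmain (inv_nonneg.mpr hn'.le)
  rw [mul_add, mul_add] at hfin
  have hlast : (n:ℝ)⁻¹ * ((n:ℝ) * ((n:ℝ)⁻¹ * _root_.sigmoid (-R) ^ 2 / (K:ℝ)^2 * ‖v - w‖^2) / 2)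
      = (n:ℝ)⁻¹ * _root_.sigmoid (-R) ^ 2 / (K:ℝ)^2 / 2 * ‖v - w‖^2 := by
    field_simp
  rw [hlast] at hfin
  linarith


theorem restricted_strong_convexity {d n : ℕ} (hn : 0 < n)
    (x : Fin n → E d) (wstar : E d)
    (hrank : (Xmat x).rank = min d n) (l : ℝ) :
    ∃ μ > (0 : ℝ), ∀ w v : E d,
      distillLoss x wstar w ≤ l → distillLoss x wstar v ≤ l →
      v - w ∈ Submodule.span ℝ (Set.range x) →
      distillLoss x wstar w + ⟪gradient (distillLoss x wstar) w, v - w⟫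
          + μ / 2 * ‖v - w‖ ^ 2
        ≤ distillLoss x wstar v :=
  restricted_strong_convexity_aux hn x wstar l

end
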